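/- Let (Ω, F, μ) be a probability space and let W₁, W₂ be real-valued random variables on Ω that are nonnegative μ-almost everywhere and exchangeable. Fix a real number γ with 0 < γ ≤ 1, set M = W₁ − γ·W₂, and assume μ{ω : M(ω) = t} = 0 for every t ∈ ℝ. Then for every s ≥ 0: μ{ω : M(ω) < −s} + μ{ω : s ≤ M(ω) < s/γ} ≤ μ{ω : M(ω) > s}. -/

import Mathlib

/-!
If `W₁ - γ W₂ < -s` with `W₁ ≥ 0` and `γ ≤ 1`, then `γ (W₂ - γ W₁) ≥ γ W₂ - W₁ > s`, i.e. the
swapped statistic exceeds `s / γ`. By exchangeability it has the same law as `M`, so the lower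
tail `{M < -s}` is dominated by `{M > s / γ}`. That set is disjoint from `{s < M < s / γ}` and
both lie in `{M > s}`; since the law of `M` has no atoms, `s ≤ M` may be traded for `s < M`.
-/

open MeasureTheory

def Exchangeable {Ω : Type*} [MeasurableSpace Ω] (μ : Measure Ω) (W₁ W₂ : Ω → ℝ) : Prop :=
  Measure.map (fun ω => (W₁ ω, W₂ ω)) μ = Measure.map (fun ω => (W₂ ω, W₁ ω)) μ

open Set

lemma Exchangeable.measure_preimage_swap {Ω : Type*} [MeasurableSpace Ω] {μ : Measure Ω}
    {W₁ W₂ : Ω → ℝ} (hexch : Exchangeable μ W₁ W₂) (hW₁ : Measurable W₁) (hW₂ : Measurable W₂)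
    {S : Set (ℝ × ℝ)} (hS : MeasurableSet S) :
    μ ((fun ω => (W₂ ω, W₁ ω)) ⁻¹' S) = μ ((fun ω => (W₁ ω, W₂ ω)) ⁻¹' S) := by
  rw [← Measure.map_apply (hW₂.prodMk hW₁) hS, ← Measure.map_apply (hW₁.prodMk hW₂) hS, hexch]

lemma div_lt_sub_mul_of_sub_mul_lt_neg {a b s γ : ℝ} (ha : 0 ≤ a) (hγpos : 0 < γ)
    (hγle : γ ≤ 1) (h : a - γ * b < -s) : s / γ < b - γ * a := by
  rw [div_lt_iff₀ hγpos]
  have hγsq : γ * γ ≤ 1 := mul_le_one₀ hγle hγpos.le hγle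
  nlinarith [mul_nonneg ha (sub_nonneg.mpr hγsq)]

lemma measure_preimage_Ico_eq_Ioo {Ω α : Type*} [MeasurableSpace Ω] [PartialOrder α]
    {μ : Measure Ω} {f : Ω → α} {a b : α} (ha : μ (f ⁻¹' {a}) = 0) :
    μ (f ⁻¹' Ico a b) = μ (f ⁻¹' Ioo a b) := by
  rw [← Ico_sdiff_left, preimage_sdiff, measure_sdiff_null ha]

lemma measure_preimage_Ioi_add_Ioo_le {Ω α : Type*} [MeasurableSpace Ω] [LinearOrder α]
    [TopologicalSpace α] [OrderClosedTopology α] [MeasurableSpace α] [OpensMeasurableSpace α]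
    {μ : Measure Ω} {f : Ω → α} (hf : Measurable f) {a b : α} (hab : a ≤ b) :
    μ (f ⁻¹' Ioi b) + μ (f ⁻¹' Ioo a b) ≤ μ (f ⁻¹' Ioi a) := by
  have hdisj : Disjoint (f ⁻¹' Ioi b) (f ⁻¹' Ioo a b) :=
    (Ioi_disjoint_Iio_same.mono_right Ioo_subset_Iio_self).preimage f
  rw [← measure_union hdisj (hf measurableSet_Ioo), ← preimage_union]
  exact measure_mono (preimage_mono (union_subset (Ioi_subset_Ioi hab) Ioo_subset_Ioi_self))

theorem stmt_17_general {Ω : Type*} [MeasurableSpace Ω] (μ : Measure Ω)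
    (W₁ W₂ : Ω → ℝ) (hW₁ : Measurable W₁) (hW₂ : Measurable W₂)
    (hW₁pos : ∀ᵐ ω ∂μ, 0 ≤ W₁ ω)
    (hexch : Exchangeable μ W₁ W₂)
    (γ : ℝ) (hγpos : 0 < γ) (hγle : γ ≤ 1)
    (M : Ω → ℝ) (hM : M = fun ω => W₁ ω - γ * W₂ ω)
    (hcont : ∀ t : ℝ, μ {ω | M ω = t} = 0) :
    ∀ s : ℝ, 0 ≤ s →
      μ {ω | M ω < -s} + μ {ω | s ≤ M ω ∧ M ω < s / γ} ≤ μ {ω | M ω > s} := by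
  intro s hs
  have hMmeas : Measurable M := hM ▸ hW₁.sub (measurable_const.mul hW₂)
  have hneg : μ {ω | M ω < -s} ≤ μ {ω | s / γ < W₂ ω - γ * W₁ ω} :=
    measure_mono_ae <| by
      filter_upwards [hW₁pos] with ω hω hlt
      exact div_lt_sub_mul_of_sub_mul_lt_neg hω hγpos hγle (by subst hM; exact hlt)
  have hswap : μ {ω | s / γ < W₂ ω - γ * W₁ ω} = μ (M ⁻¹' Ioi (s / γ)) := by
    subst hM
    exact hexch.measure_preimage_swap hW₁ hW₂
      (measurableSet_lt measurable_const (measurable_fst.sub (measurable_const.mul measurable_snd)))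
  calc μ {ω | M ω < -s} + μ (M ⁻¹' Ico s (s / γ))
      ≤ μ (M ⁻¹' Ioi (s / γ)) + μ (M ⁻¹' Ioo s (s / γ)) := by
        rw [measure_preimage_Ico_eq_Ioo (hcont s), ← hswap]
        gcongr
    _ ≤ μ (M ⁻¹' Ioi s) :=
        measure_preimage_Ioi_add_Ioo_le hMmeas (le_div_self hs hγpos hγle)

/-- Lower bound justifying the self-guiding BGM cutoff rule: the observable
quantity does not underestimate the upper-tail probability. -/
theorem stmt_17 {Ω : Type*} [MeasurableSpace Ω] (μ : Measure Ω) [IsProbabilityMeasure μ]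
    (W₁ W₂ : Ω → ℝ) (hW₁ : Measurable W₁) (hW₂ : Measurable W₂)
    (hW₁pos : ∀ᵐ ω ∂μ, 0 ≤ W₁ ω) (hW₂pos : ∀ᵐ ω ∂μ, 0 ≤ W₂ ω)
    (hexch : Exchangeable μ W₁ W₂)
    (γ : ℝ) (hγpos : 0 < γ) (hγle : γ ≤ 1)
    (M : Ω → ℝ) (hM : M = fun ω => W₁ ω - γ * W₂ ω)
    (hcont : ∀ t : ℝ, μ {ω | M ω = t} = 0) :
    ∀ s : ℝ, 0 ≤ s →
      μ {ω | M ω < -s} + μ {ω | s ≤ M ω ∧ M ω < s / γ} ≤ μ {ω | M ω > s} :=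
  stmt_17_general μ W₁ W₂ hW₁ hW₂ hW₁pos hexch γ hγpos hγle M hM hcont
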